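/- arXiv:2002.06422 — 4 statements merged into one kernel-verified Lean document; each statement's English description precedes it below -/
import Mathlib

section
/- Let ρ(x) = (|x_H|^4 + x_{2d+1}^2)^{1/4} be the gauge norm on the Heisenberg group H^d and f : (0,∞) → R be C^2. Then at any point with ρ > 0, the eigenvalues of the symmetrized horizontal Hessian D^2_{H^d} f(ρ) are: f''(ρ)|D_{H^d}ρ|^2 (simple), 3 f'(ρ)|D_{H^d}ρ|^2/ρ (simple), and f'(ρ)|D_{H^d}ρ|^2/ρ with multiplicity 2d−2. -/
open Matrix MeasureTheory Real Set

noncomputable def pucciPlus (l L : ℝ) {n : ℕ} {M : Matrix (Fin n) (Fin n) ℝ}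
    (hM : M.IsHermitian) : ℝ :=
  ∑ i, (L * max (hM.eigenvalues i) 0 + l * min (hM.eigenvalues i) 0)

noncomputable def pucciMinus (l L : ℝ) {n : ℕ} {M : Matrix (Fin n) (Fin n) ℝ}
    (hM : M.IsHermitian) : ℝ :=
  ∑ i, (l * max (hM.eigenvalues i) 0 + L * min (hM.eigenvalues i) 0)

noncomputable def heisVF (d : ℕ) (i : Fin (2*d)) (x : Fin (2*d+1) → ℝ) : Fin (2*d+1) → ℝ :=
  if _h : (i : ℕ) < d then
    (Pi.single (Fin.castSucc i) 1 : Fin (2*d+1) → ℝ)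
      + (2 * x ⟨(i:ℕ) + d, by omega⟩) • (Pi.single (Fin.last (2*d)) 1 : Fin (2*d+1) → ℝ)
  else
    (Pi.single (Fin.castSucc i) 1 : Fin (2*d+1) → ℝ)
      - (2 * x ⟨(i:ℕ) - d, by omega⟩) • (Pi.single (Fin.last (2*d)) 1 : Fin (2*d+1) → ℝ)

noncomputable def hGrad (d : ℕ) (u : (Fin (2*d+1) → ℝ) → ℝ) (x : Fin (2*d+1) → ℝ) :
    Fin (2*d) → ℝ := fun i => fderiv ℝ u x (heisVF d i x)

noncomputable def hGradSq (d : ℕ) (u : (Fin (2*d+1) → ℝ) → ℝ) (x : Fin (2*d+1) → ℝ) : ℝ :=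
  ∑ i : Fin (2*d), (hGrad d u x i) ^ 2

noncomputable def hHess (d : ℕ) (u : (Fin (2*d+1) → ℝ) → ℝ) (x : Fin (2*d+1) → ℝ) :
    Matrix (Fin (2*d)) (Fin (2*d)) ℝ :=
  Matrix.of fun i j =>
    (fderiv ℝ (fun y => hGrad d u y j) x (heisVF d i x)
      + fderiv ℝ (fun y => hGrad d u y i) x (heisVF d j x)) / 2

lemma hHess_herm (d : ℕ) (u : (Fin (2*d+1) → ℝ) → ℝ) (x : Fin (2*d+1) → ℝ) :
    (hHess d u x).IsHermitian := by
  unfold Matrix.IsHermitian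
  ext i j
  simp [hHess, Matrix.conjTranspose_apply, add_comm]

/-- The Koranyi gauge norm on the Heisenberg group `ℍ^d ≃ ℝ^{2d+1}`. -/
noncomputable def hGauge (d : ℕ) (x : Fin (2*d+1) → ℝ) : ℝ :=
  ((∑ i : Fin (2*d), x (Fin.castSucc i) ^ 2) ^ 2 + x (Fin.last (2*d)) ^ 2) ^ (1/4 : ℝ)

/-!
Write `z = J x_H` (`hJ`) for the vector with `X_i = ∂_i + 2 z_i ∂_{2d+1}`, and
`g = |x_H|² x_H + x_{2d+1} z` (`hGaugeNum`). Then `X_i ρ = g_i / ρ³`, and one more horizontal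
derivative of `f'(ρ) g_j / ρ³` gives, after symmetrization (which kills the antisymmetric
`X_i z_j`),
`D²f(ρ) = (f' |x_H|² / ρ³) I + ((f'' - 3 f' / ρ) / ρ⁶) g gᵀ + (2 f' / ρ³) (x_H x_Hᵀ + z zᵀ)`.
As `x_H ⊥ z`, `|z| = |x_H|` and `g ∈ span (x_H, z)`, this is a scalar matrix plus `A * B` with
`A` of rank two, and the eigenvalues of `A * B` are those of the `2 × 2` matrix `B * A`
padded with zeros.
-/

open Filter Topology

open Polynomial in
theorem Matrix.IsHermitian.eigenvalues_smul_one_add_mul {ι κ : Type*}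
    [Fintype ι] [DecidableEq ι] [Fintype κ] [DecidableEq κ] {M : Matrix ι ι ℝ}
    (hM : M.IsHermitian) {c : ℝ} {A : Matrix ι κ ℝ} {B : Matrix κ ι ℝ} (hMAB : M = c • 1 + A * B)
    (hcard : Fintype.card κ ≤ Fintype.card ι) {μ : Multiset ℝ}
    (hBA : (B * A).charpoly = (μ.map fun a => X - C a).prod) :
    Finset.univ.val.map hM.eigenvalues =
      μ.map (c + ·) + Multiset.replicate (Fintype.card ι - Fintype.card κ) c := by
  have hAB : (A * B).charpoly = M.charpoly.comp (X + C c) := by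
    rw [← charpoly_sub_scalar, hMAB, scalar_apply, ← smul_one_eq_diagonal, add_sub_cancel_left]
  have hM_charpoly : M.charpoly =
      ((μ.map (c + ·) + Multiset.replicate (Fintype.card ι - Fintype.card κ) c).map
        fun a => X - C a).prod := by
    have hinv : (X + C c).comp (X - C c) = (X : ℝ[X]) := by simp
    rw [← comp_X (p := M.charpoly), ← hinv, ← comp_assoc, ← hAB,
      charpoly_mul_comm_of_le A B hcard, hBA]
    simp [multiset_prod_comp, Multiset.map_map, sub_sub, mul_comm]
  have := hM.roots_charpoly_eq_eigenvalues
  rw [hM_charpoly, roots_multiset_prod_X_sub_C] at this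
  simpa using this.symm

open Polynomial in
theorem Matrix.IsHermitian.eigenvalues_smul_one_add_rank_two {ι : Type*} [Fintype ι]
    [DecidableEq ι] {M : Matrix ι ι ℝ} (hM : M.IsHermitian) (hcard : 2 ≤ Fintype.card ι)
    {w z : ι → ℝ} {s p q a b c : ℝ} (hw : w ⬝ᵥ w = s) (hz : z ⬝ᵥ z = s) (hwz : w ⬝ᵥ z = 0)
    (hMwz : M = c • 1 + a • vecMulVec (p • w + q • z) (p • w + q • z)
      + b • (vecMulVec w w + vecMulVec z z)) :
    Finset.univ.val.map hM.eigenvalues =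
      (c + s * b + s * a * (p ^ 2 + q ^ 2)) ::ₘ (c + s * b) ::ₘ
        Multiset.replicate (Fintype.card ι - 2) c := by
  let W : Matrix ι (Fin 2) ℝ := of fun i => ![w i, z i]
  let K : Matrix (Fin 2) (Fin 2) ℝ := a • vecMulVec ![p, q] ![p, q] + b • 1
  have hWW : Wᵀ * W = s • 1 := by
    ext k l
    fin_cases k <;> fin_cases l
    · simpa [W, mul_apply, dotProduct] using hw
    · simpa [W, mul_apply, dotProduct] using hwz
    · simpa [W, mul_apply, dotProduct, mul_comm] using hwz
    · simpa [W, mul_apply, dotProduct] using hz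
  have hM_eq : M = c • 1 + W * (K * Wᵀ) := by
    rw [hMwz, add_assoc]
    congr 1
    ext i j
    simp [W, K, mul_apply, vecMulVec_apply, Fin.sum_univ_two, one_apply]
    ring
  have hKW : (K * Wᵀ * W).charpoly =
      (({s * b + s * a * (p ^ 2 + q ^ 2), s * b} : Multiset ℝ).map fun r => X - C r).prod := by
    rw [Matrix.mul_assoc, hWW, charpoly_fin_two]
    simp [K, trace_fin_two, det_fin_two, map_ofNat]
    ring
  have := hM.eigenvalues_smul_one_add_mul hM_eq (by simpa using hcard) hKW
  rw [this, Fintype.card_fin]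
  simp [add_assoc]

lemma ContDiffOn.hasDerivAt_deriv {f : ℝ → ℝ} {s : Set ℝ} (hf : ContDiffOn ℝ 2 f s)
    (hs : IsOpen s) {r : ℝ} (hr : r ∈ s) : HasDerivAt (deriv f) (deriv (deriv f) r) r :=
  (((hf.deriv_of_isOpen hs (m := 1) (by norm_num)).differentiableOn
    (by norm_num)).differentiableAt (hs.mem_nhds hr)).hasDerivAt

section HorizontalCalculus

variable {d : ℕ} {u v : (Fin (2*d+1) → ℝ) → ℝ} {x : Fin (2*d+1) → ℝ} {i : Fin (2*d)}

lemma hGrad_congr (h : u =ᶠ[𝓝 x] v) : hGrad d u x = hGrad d v x := by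
  unfold hGrad
  rw [h.fderiv_eq]

lemma hGrad_coord (k : Fin (2*d+1)) : hGrad d (fun y => y k) x i = heisVF d i x k := by
  simp [hGrad, (hasFDerivAt_apply k x).fderiv]

lemma hGrad_add (hu : DifferentiableAt ℝ u x) (hv : DifferentiableAt ℝ v x) :
    hGrad d (fun y => u y + v y) x i = hGrad d u x i + hGrad d v x i := by
  simp [hGrad, fderiv_fun_add hu hv]

lemma hGrad_mul (hu : DifferentiableAt ℝ u x) (hv : DifferentiableAt ℝ v x) :
    hGrad d (fun y => u y * v y) x i = u x * hGrad d v x i + v x * hGrad d u x i := by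
  simp [hGrad, fderiv_fun_mul hu hv]

lemma hGrad_const_mul (hu : DifferentiableAt ℝ u x) (a : ℝ) :
    hGrad d (fun y => a * u y) x i = a * hGrad d u x i := by
  simp [hGrad, fderiv_const_mul hu]

lemma hGrad_sum {ι : Type*} (s : Finset ι) {u : ι → (Fin (2*d+1) → ℝ) → ℝ}
    (hu : ∀ k ∈ s, DifferentiableAt ℝ (u k) x) :
    hGrad d (fun y => ∑ k ∈ s, u k y) x i = ∑ k ∈ s, hGrad d (u k) x i := by
  simp [hGrad, fderiv_fun_sum hu]

lemma hGrad_comp {φ : ℝ → ℝ} {φ' : ℝ} (hφ : HasDerivAt φ φ' (u x))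
    (hu : DifferentiableAt ℝ u x) :
    hGrad d (fun y => φ (u y)) x i = φ' * hGrad d u x i := by
  have h : HasFDerivAt (fun y => φ (u y)) (φ' • fderiv ℝ u x) x :=
    hφ.comp_hasFDerivAt x hu.hasFDerivAt
  simp [hGrad, h.fderiv]

lemma hGrad_pow (hu : DifferentiableAt ℝ u x) (n : ℕ) :
    hGrad d (fun y => u y ^ n) x i = n * u x ^ (n - 1) * hGrad d u x i :=
  hGrad_comp (hasDerivAt_pow n (u x)) hu

lemma hHess_apply (u : (Fin (2*d+1) → ℝ) → ℝ) (i j : Fin (2*d)) :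
    hHess d u x i j =
      (hGrad d (fun y => hGrad d u y j) x i + hGrad d (fun y => hGrad d u y i) x j) / 2 :=
  rfl

end HorizontalCalculus

section Coordinates

variable {d : ℕ}

def hPartner (d : ℕ) (i : Fin (2*d)) : Fin (2*d) :=
  if h : (i : ℕ) < d then ⟨i + d, by omega⟩ else ⟨i - d, by omega⟩

def hSign (d : ℕ) (i : Fin (2*d)) : ℝ := if (i : ℕ) < d then 1 else -1

def hJ (d : ℕ) (x : Fin (2*d+1) → ℝ) (i : Fin (2*d)) : ℝ :=
  hSign d i * x (Fin.castSucc (hPartner d i))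

def hSqNorm (d : ℕ) (x : Fin (2*d+1) → ℝ) : ℝ := ∑ i : Fin (2*d), x (Fin.castSucc i) ^ 2

lemma hPartner_involutive : Function.Involutive (hPartner d) := by
  intro i
  by_cases h : (i : ℕ) < d
  · simp [hPartner, h]
  · apply Fin.ext
    simp [hPartner, h, show (i : ℕ) - d < d by omega]
    omega

lemma hSign_hPartner (i : Fin (2*d)) : hSign d (hPartner d i) = -hSign d i := by
  unfold hSign hPartner
  by_cases h : (i : ℕ) < d
  · simp [h]
  · simp [h, show (i : ℕ) - d < d by omega]

lemma hSign_mul_self (i : Fin (2*d)) : hSign d i * hSign d i = 1 := by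
  unfold hSign
  split_ifs <;> norm_num

lemma heisVF_eq (i : Fin (2*d)) (x : Fin (2*d+1) → ℝ) :
    heisVF d i x = Pi.single (Fin.castSucc i) 1 + (2 * hJ d x i) • Pi.single (Fin.last _) 1 := by
  unfold heisVF hJ hSign hPartner
  split_ifs <;> simp [sub_eq_add_neg]

lemma heisVF_castSucc (i j : Fin (2*d)) (x : Fin (2*d+1) → ℝ) :
    heisVF d i x (Fin.castSucc j) = if j = i then 1 else 0 := by
  simp [heisVF_eq, Pi.single_apply, (Fin.castSucc_lt_last j).ne]

lemma heisVF_last (i : Fin (2*d)) (x : Fin (2*d+1) → ℝ) :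
    heisVF d i x (Fin.last _) = 2 * hJ d x i := by
  simp [heisVF_eq, (Fin.castSucc_lt_last i).ne']

lemma init_dotProduct_self (x : Fin (2*d+1) → ℝ) : Fin.init x ⬝ᵥ Fin.init x = hSqNorm d x := by
  simp [dotProduct, hSqNorm, Fin.init, sq]

lemma hJ_dotProduct_self (x : Fin (2*d+1) → ℝ) : hJ d x ⬝ᵥ hJ d x = hSqNorm d x := by
  rw [← init_dotProduct_self, dotProduct, dotProduct]
  conv_rhs => rw [← Equiv.sum_comp (hPartner_involutive.toPerm _)]
  refine Finset.sum_congr rfl fun i _ => ?_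
  simp only [hJ, Function.Involutive.coe_toPerm, Fin.init]
  linear_combination x (Fin.castSucc (hPartner d i)) ^ 2 * hSign_mul_self i

lemma init_dotProduct_hJ (x : Fin (2*d+1) → ℝ) : Fin.init x ⬝ᵥ hJ d x = 0 := by
  have h : Fin.init x ⬝ᵥ hJ d x = -(Fin.init x ⬝ᵥ hJ d x) := by
    conv_lhs => rw [dotProduct, ← Equiv.sum_comp (hPartner_involutive.toPerm _)]
    rw [dotProduct, ← Finset.sum_neg_distrib]
    refine Finset.sum_congr rfl fun i _ => ?_
    simp only [hJ, Function.Involutive.coe_toPerm, Fin.init, hPartner_involutive _,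
      hSign_hPartner]
    ring
  linarith

@[fun_prop]
lemma differentiable_hSqNorm : Differentiable ℝ (hSqNorm d) := by
  unfold hSqNorm
  fun_prop

@[fun_prop]
lemma differentiable_hJ (j : Fin (2*d)) : Differentiable ℝ (fun y => hJ d y j) := by
  unfold hJ
  fun_prop

lemma hGrad_hSqNorm {x : Fin (2*d+1) → ℝ} {i : Fin (2*d)} :
    hGrad d (hSqNorm d) x i = 2 * x (Fin.castSucc i) := by
  change hGrad d (fun y => ∑ k, y (Fin.castSucc k) ^ 2) x i = _
  rw [hGrad_sum _ fun k _ => by fun_prop, Finset.sum_congr rfl fun k _ =>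
    hGrad_pow (u := fun y => y (Fin.castSucc k)) (by fun_prop) 2]
  simp [hGrad_coord, heisVF_castSucc]

lemma hGrad_last {x : Fin (2*d+1) → ℝ} {i : Fin (2*d)} :
    hGrad d (fun y => y (Fin.last _)) x i = 2 * hJ d x i := by
  rw [hGrad_coord, heisVF_last]

lemma hGrad_hJ {x : Fin (2*d+1) → ℝ} {i j : Fin (2*d)} :
    hGrad d (fun y => hJ d y j) x i = hSign d j * if hPartner d j = i then 1 else 0 := by
  simp only [hJ]
  rw [hGrad_const_mul (by fun_prop), hGrad_coord, heisVF_castSucc]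

lemma hGrad_hJ_antisymm {x : Fin (2*d+1) → ℝ} {i j : Fin (2*d)} :
    hGrad d (fun y => hJ d y j) x i = -hGrad d (fun y => hJ d y i) x j := by
  rw [hGrad_hJ, hGrad_hJ]
  by_cases h : hPartner d j = i
  · subst h
    simp [hPartner_involutive _, hSign_hPartner]
  · have h' : hPartner d i ≠ j := fun h' => h (h' ▸ hPartner_involutive i)
    simp [h, h']

end Coordinates

section Gauge

variable {d : ℕ} {x : Fin (2*d+1) → ℝ} {i j : Fin (2*d)}

def hGaugeNum (d : ℕ) (x : Fin (2*d+1) → ℝ) : Fin (2*d) → ℝ :=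
  hSqNorm d x • Fin.init x + x (Fin.last _) • hJ d x

lemma hGaugeNum_apply (x : Fin (2*d+1) → ℝ) (j : Fin (2*d)) :
    hGaugeNum d x j = hSqNorm d x * x (Fin.castSucc j) + x (Fin.last _) * hJ d x j :=
  rfl

@[fun_prop]
lemma differentiable_hGaugeNum (j : Fin (2*d)) :
    Differentiable ℝ (fun y => hGaugeNum d y j) := by
  simp only [hGaugeNum_apply]
  fun_prop

lemma hGauge_pow_four (x : Fin (2*d+1) → ℝ) :
    hGauge d x ^ 4 = hSqNorm d x ^ 2 + x (Fin.last _) ^ 2 := by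
  rw [hGauge, ← Real.rpow_natCast, ← Real.rpow_mul (by positivity)]
  norm_num
  rfl

lemma hGaugeNum_dotProduct_self (x : Fin (2*d+1) → ℝ) :
    hGaugeNum d x ⬝ᵥ hGaugeNum d x = hSqNorm d x * hGauge d x ^ 4 := by
  simp only [hGaugeNum, add_dotProduct, dotProduct_add, smul_dotProduct, dotProduct_smul,
    init_dotProduct_self, hJ_dotProduct_self, init_dotProduct_hJ, dotProduct_comm (hJ d x),
    hGauge_pow_four, smul_eq_mul]
  ring

lemma differentiableAt_hGauge (hx : 0 < hGauge d x) : DifferentiableAt ℝ (hGauge d) x := by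
  have hN : hSqNorm d x ^ 2 + x (Fin.last _) ^ 2 ≠ 0 := by
    rw [← hGauge_pow_four]
    positivity
  exact (by fun_prop : DifferentiableAt ℝ (fun y => hSqNorm d y ^ 2 + y (Fin.last _) ^ 2) x)
    |>.rpow_const (Or.inl hN)

lemma hGrad_hGauge (hx : 0 < hGauge d x) :
    hGrad d (hGauge d) x i = hGaugeNum d x i / hGauge d x ^ 3 := by
  have hN : hSqNorm d x ^ 2 + x (Fin.last _) ^ 2 ≠ 0 := by
    rw [← hGauge_pow_four]
    positivity
  change hGrad d (fun y => (hSqNorm d y ^ 2 + y (Fin.last _) ^ 2) ^ (1/4 : ℝ)) x i = _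
  rw [hGrad_comp (Real.hasDerivAt_rpow_const (Or.inl hN)) (by fun_prop),
    hGrad_add (by fun_prop) (by fun_prop), hGrad_pow (by fun_prop), hGrad_pow (by fun_prop),
    hGrad_hSqNorm, hGrad_last, Real.rpow_sub_one hN]
  rw [show (hSqNorm d x ^ 2 + x (Fin.last _) ^ 2) ^ (1/4 : ℝ) = hGauge d x from rfl,
    ← hGauge_pow_four, hGaugeNum_apply]
  field_simp
  ring

lemma hGradSq_hGauge (hx : 0 < hGauge d x) :
    hGradSq d (hGauge d) x = hSqNorm d x / hGauge d x ^ 2 := by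
  have hsum : ∑ i, hGaugeNum d x i ^ 2 = hSqNorm d x * hGauge d x ^ 4 := by
    simpa [dotProduct, sq] using hGaugeNum_dotProduct_self x
  simp only [hGradSq, hGrad_hGauge hx, div_pow, ← Finset.sum_div, hsum]
  field_simp

lemma hGrad_hGaugeNum :
    hGrad d (fun y => hGaugeNum d y j) x i =
      hSqNorm d x * (if j = i then 1 else 0) + 2 * x (Fin.castSucc j) * x (Fin.castSucc i)
        + (x (Fin.last _) * hGrad d (fun y => hJ d y j) x i + 2 * hJ d x j * hJ d x i) := by
  simp only [hGaugeNum_apply]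
  rw [hGrad_add (by fun_prop) (by fun_prop), hGrad_mul (by fun_prop) (by fun_prop),
    hGrad_mul (by fun_prop) (by fun_prop), hGrad_hSqNorm, hGrad_last, hGrad_coord,
    heisVF_castSucc]
  ring

lemma hGrad_hGaugeNum_add_hGrad_hGaugeNum :
    hGrad d (fun y => hGaugeNum d y j) x i + hGrad d (fun y => hGaugeNum d y i) x j =
      2 * (2 * (x (Fin.castSucc i) * x (Fin.castSucc j) + hJ d x i * hJ d x j)
        + hSqNorm d x * if i = j then 1 else 0) := by
  rw [hGrad_hGaugeNum, hGrad_hGaugeNum, hGrad_hJ_antisymm (i := i)]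
  by_cases h : i = j
  · subst h
    simp
    ring
  · simp [h, Ne.symm h]
    ring

lemma hGrad_comp_hGauge {f : ℝ → ℝ} {f' : ℝ} (hf : HasDerivAt f f' (hGauge d x))
    (hx : 0 < hGauge d x) :
    hGrad d (fun y => f (hGauge d y)) x j = f' / hGauge d x ^ 3 * hGaugeNum d x j := by
  rw [hGrad_comp hf (differentiableAt_hGauge hx), hGrad_hGauge hx]
  ring

lemma hHess_comp_hGauge {f : ℝ → ℝ} {f'' : ℝ} (hf : ∀ r > 0, HasDerivAt f (deriv f r) r)
    (hf' : HasDerivAt (deriv f) f'' (hGauge d x)) (hx : 0 < hGauge d x) :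
    hHess d (fun y => f (hGauge d y)) x =
      (deriv f (hGauge d x) * hSqNorm d x / hGauge d x ^ 3) • 1
        + ((f'' - 3 * deriv f (hGauge d x) / hGauge d x) / hGauge d x ^ 6) •
          vecMulVec (hGaugeNum d x) (hGaugeNum d x)
        + (2 * deriv f (hGauge d x) / hGauge d x ^ 3) •
          (vecMulVec (Fin.init x) (Fin.init x) + vecMulVec (hJ d x) (hJ d x)) := by
  set ρ := hGauge d x
  set φ : ℝ → ℝ := fun r => deriv f r / r ^ 3
  have hφ : HasDerivAt φ ((f'' - 3 * deriv f ρ / ρ) / ρ ^ 3) ρ := by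
    refine (hf'.div (hasDerivAt_pow 3 ρ) (pow_ne_zero 3 hx.ne')).congr_deriv ?_
    field_simp
    ring
  have hgrad_radial (k : Fin (2*d)) :
      hGrad d (fun y => hGrad d (fun y => f (hGauge d y)) y k) x =
        hGrad d (fun y => φ (hGauge d y) * hGaugeNum d y k) x := by
    refine hGrad_congr ?_
    filter_upwards [(differentiableAt_hGauge hx).continuousAt.eventually (lt_mem_nhds hx)]
      with y hy using hGrad_comp_hGauge (hf _ hy) hy
  have hgrad_product (k l : Fin (2*d)) :
      hGrad d (fun y => φ (hGauge d y) * hGaugeNum d y k) x l =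
        φ ρ * hGrad d (fun y => hGaugeNum d y k) x l
          + hGaugeNum d x k * ((f'' - 3 * deriv f ρ / ρ) / ρ ^ 3 * (hGaugeNum d x l / ρ ^ 3)) := by
    have hρ := differentiableAt_hGauge hx
    have hφρ : DifferentiableAt ℝ (fun y => φ (hGauge d y)) x :=
      DifferentiableAt.comp (g := φ) x hφ.differentiableAt hρ
    rw [hGrad_mul hφρ (by fun_prop), hGrad_comp hφ hρ, hGrad_hGauge hx]
  ext i j
  rw [hHess_apply, hgrad_radial, hgrad_radial, hgrad_product, hgrad_product]
  simp only [Matrix.add_apply, Matrix.smul_apply, one_apply, vecMulVec_apply, Fin.init,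
    smul_eq_mul, φ]
  linear_combination (deriv f ρ / ρ ^ 3 / 2) *
    hGrad_hGaugeNum_add_hGrad_hGaugeNum (x := x) (i := i) (j := j)

end Gauge

/-- the eigenvalues (with multiplicity) of the symmetrized horizontal Hessian
of a radial function `f(ρ)` are `f''(ρ)|Dρ|²`, `3f'(ρ)|Dρ|²/ρ` (each simple) and
`f'(ρ)|Dρ|²/ρ` with multiplicity `2d−2`. -/
theorem hHess_radial_eigenvalues (d : ℕ) (hd : 1 ≤ d) (f : ℝ → ℝ)
    (hf : ContDiffOn ℝ 2 f (Set.Ioi 0))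
    (x : Fin (2*d+1) → ℝ) (hx : 0 < hGauge d x) :
    (Finset.univ.val.map
        (hHess_herm d (fun y => f (hGauge d y)) x).eigenvalues : Multiset ℝ) =
      deriv (deriv f) (hGauge d x) * hGradSq d (hGauge d) x ::ₘ
      3 * deriv f (hGauge d x) * hGradSq d (hGauge d) x / hGauge d x ::ₘ
      Multiset.replicate (2*d - 2)
        (deriv f (hGauge d x) * hGradSq d (hGauge d) x / hGauge d x) := by
  have hf' : ∀ r > 0, HasDerivAt f (deriv f r) r := fun r hr =>
    ((hf.differentiableOn (by norm_num)).differentiableAt (Ioi_mem_nhds hr)).hasDerivAt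
  have hHess := hHess_comp_hGauge hf' (hf.hasDerivAt_deriv isOpen_Ioi hx) hx
  rw [(hHess_herm d _ x).eigenvalues_smul_one_add_rank_two (by simp; omega)
      (init_dotProduct_self x) (hJ_dotProduct_self x) (init_dotProduct_hJ x) hHess,
    hGradSq_hGauge hx, Fintype.card_fin, ← hGauge_pow_four]
  congr 2 <;> field_simp <;> ring
end

section
/- Let m : [0,∞) → R be nonnegative and nonincreasing, β > 2, and suppose that for all 0 < r_1 ≤ r ≤ r_2: m(r) ≥ (G(r)/G(r_2)) m(r_2) + (1 − G(r)/G(r_2)) m(r_1), where G(r) = r^{2−β} − r_1^{2−β}. Then the function r ↦ m(r) r^{β−2} is nondecreasing on (0,∞). -/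
/-!
Write `g r = r ^ (2 - β)`, a positive function decreasing to `0`. For `a < b ≤ t` the
three-sphere inequality on `[a, t]`, with the nonnegative `m t` term dropped, gives
`m b ≥ (g t - g b) / (g t - g a) * m a`; letting `t → ∞` yields `m b ≥ g b / g a * m a`,
i.e. `m a / g a ≤ m b / g b`.
-/

open Filter Topology Set

/-- The paper's `G(r)` is `g r - g r1`. -/
def HadamardThreeSphere (g m : ℝ → ℝ) : Prop :=
  ∀ r1 r r2 : ℝ, 0 < r1 → r1 ≤ r → r ≤ r2 →
    m r ≥ ((g r - g r1) / (g r2 - g r1)) * m r2 + (1 - (g r - g r1) / (g r2 - g r1)) * m r1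

section

variable {g m : ℝ → ℝ}

theorem tendsto_sub_div_sub_of_tendsto_zero (hg0 : Tendsto g atTop (𝓝 0)) {c d : ℝ}
    (hd : d ≠ 0) : Tendsto (fun t => (g t - c) / (g t - d)) atTop (𝓝 (c / d)) := by
  have := (hg0.sub_const c).div (hg0.sub_const d) (by simpa using hd)
  rwa [zero_sub, zero_sub, neg_div_neg_eq] at this

theorem HadamardThreeSphere.div_mul_le (hH : HadamardThreeSphere g m)
    (hg : StrictAntiOn g (Ioi 0)) (hg0 : Tendsto g atTop (𝓝 0)) (hgpos : ∀ r > 0, 0 < g r)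
    (hm0 : ∀ r ≥ 0, 0 ≤ m r) {a b : ℝ} (ha : 0 < a) (hab : a < b) :
    g b / g a * m a ≤ m b := by
  have hlim := (tendsto_sub_div_sub_of_tendsto_zero hg0 (c := g b) (hgpos a ha).ne').mul_const (m a)
  refine le_of_tendsto hlim ?_
  filter_upwards [eventually_ge_atTop b] with t hbt
  have hta : g t < g a := hg ha (ha.trans (hab.trans_le hbt)) (hab.trans_le hbt)
  set l := (g b - g a) / (g t - g a) with hl_def
  have hl : 0 ≤ l := div_nonneg_of_nonpos (sub_nonpos.2 (hg ha (ha.trans hab) hab).le)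
    (sub_nonpos.2 hta.le)
  calc (g t - g b) / (g t - g a) * m a = (1 - l) * m a := by
        rw [hl_def, one_sub_div (sub_neg.2 hta).ne, sub_sub_sub_cancel_right]
    _ ≤ l * m t + (1 - l) * m a :=
        le_add_of_nonneg_left (mul_nonneg hl (hm0 t (ha.le.trans (hab.le.trans hbt))))
    _ ≤ m b := hH a b t ha hab.le hbt

theorem HadamardThreeSphere.monotoneOn_div (hH : HadamardThreeSphere g m)
    (hg : StrictAntiOn g (Ioi 0)) (hg0 : Tendsto g atTop (𝓝 0)) (hgpos : ∀ r > 0, 0 < g r)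
    (hm0 : ∀ r ≥ 0, 0 ≤ m r) : MonotoneOn (fun r => m r / g r) (Ioi 0) := by
  intro a ha b hb hab
  rcases hab.eq_or_lt with rfl | hab
  · rfl
  have key := hH.div_mul_le hg hg0 hgpos hm0 ha hab
  rw [div_mul_eq_mul_div, div_le_iff₀ (hgpos a ha)] at key
  rw [div_le_div_iff₀ (hgpos a ha) (hgpos b hb)]
  linarith

end

theorem hadamard_monotonicity_general (β : ℝ) (hβ : 2 < β) (m : ℝ → ℝ)
    (hm0 : ∀ r ≥ (0:ℝ), 0 ≤ m r)
    (hH : ∀ r1 r r2 : ℝ, 0 < r1 → r1 ≤ r → r ≤ r2 →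
      m r ≥ ((r ^ (2-β) - r1 ^ (2-β)) / (r2 ^ (2-β) - r1 ^ (2-β))) * m r2
        + (1 - (r ^ (2-β) - r1 ^ (2-β)) / (r2 ^ (2-β) - r1 ^ (2-β))) * m r1) :
    MonotoneOn (fun r : ℝ => m r * r ^ (β-2)) (Set.Ioi 0) := by
  have hexp : 2 - β < 0 := by linarith
  have hg0 : Tendsto (fun r : ℝ => r ^ (2 - β)) atTop (𝓝 0) := by
    simpa only [neg_sub] using tendsto_rpow_neg_atTop (y := β - 2) (by linarith)
  have hdiv := HadamardThreeSphere.monotoneOn_div (g := fun r => r ^ (2 - β)) hH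
    (Real.strictAntiOn_rpow_Ioi_of_exponent_neg hexp) hg0
    (fun r hr => Real.rpow_pos_of_pos hr _) hm0
  refine hdiv.congr fun r hr => ?_
  simp only
  rw [div_eq_mul_inv, ← Real.rpow_neg (le_of_lt hr), neg_sub]

/-- if a nonnegative nonincreasing `m` satisfies the Hadamard three-sphere
inequality with `G(r) = r^{2−β} − r₁^{2−β}`, `β > 2`, then `r ↦ m(r)r^{β−2}` is
nondecreasing on `(0,∞)`. -/
theorem hadamard_monotonicity (β : ℝ) (hβ : 2 < β) (m : ℝ → ℝ)
    (hm0 : ∀ r ≥ (0:ℝ), 0 ≤ m r) (hanti : AntitoneOn m (Set.Ici 0))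
    (hH : ∀ r1 r r2 : ℝ, 0 < r1 → r1 ≤ r → r ≤ r2 →
      m r ≥ ((r ^ (2-β) - r1 ^ (2-β)) / (r2 ^ (2-β) - r1 ^ (2-β))) * m r2
        + (1 - (r ^ (2-β) - r1 ^ (2-β)) / (r2 ^ (2-β) - r1 ^ (2-β))) * m r1) :
    MonotoneOn (fun r : ℝ => m r * r ^ (β-2)) (Set.Ioi 0) :=
  hadamard_monotonicity_general β hβ m hm0 hH
end

section
/- Let 0 < λ ≤ Λ, Q = 2d+2, β = Λ(Q−1)/λ + 1, δ > 0 with 2(δ+1) < β, and C > 0. Define u(x) = C(1+ρ(x)^2)^{−δ} on the Heisenberg group, ρ the gauge norm. Then at every point with ρ(x)^2 ≥ 1/(2δ+1) and ρ(x) > 0, one has M^-_{λ,Λ}(D^2_{H^d}u(x)) ≤ −2λ C δ |D_{H^d}ρ|^2 (β − 2(δ+1))/(1+ρ^2)^{δ+1}. -/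
open Matrix MeasureTheory Real Set

/-!
Write `ρ⁴ = R = |z|⁴ + t²`. This polynomial has horizontal gradient `4W` with
`W = |z|² z + t J z` and horizontal Hessian `4|z|² I + 8 (z ⊗ z + Jz ⊗ Jz)`, so `W` is an
eigenvector of `D²R` with eigenvalue `12|z|²`. Differentiating `R = ρ⁴` twice gives
`tr D²ρ = (Q-1)|Dρ|²/ρ` and `D²ρ Dρ = 0`. Hence for `u = g(ρ)` the matrix
`D²u = g''(ρ) Dρ ⊗ Dρ + g'(ρ) D²ρ` has the eigenvector `Dρ` with eigenvalue `g''(ρ)|Dρ|²` and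
trace `g''(ρ)|Dρ|² + (Q-1) g'(ρ)|Dρ|²/ρ`. As `M⁻(M) = Λ tr M - (Λ-λ) Σ (positive eigenvalues)`
and that sum dominates every eigenvalue, `M⁻(D²u) ≤ λ g''(ρ)|Dρ|² + Λ (Q-1) g'(ρ)|Dρ|²/ρ`,
which is the claimed bound minus `4λCδ(δ+1)|Dρ|²(1+ρ²)^(-δ-2)`.
-/

namespace Matrix.IsHermitian

variable {n : ℕ} {M : Matrix (Fin n) (Fin n) ℝ}

theorem pucciMinus_eq (hM : M.IsHermitian) (l L : ℝ) :
    pucciMinus l L hM = L * M.trace - (L - l) * ∑ i, max (hM.eigenvalues i) 0 := by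
  rw [hM.trace_eq_sum_eigenvalues, pucciMinus, Finset.mul_sum, Finset.mul_sum,
    ← Finset.sum_sub_distrib]
  refine Finset.sum_congr rfl fun i _ => ?_
  simp only [RCLike.ofReal_real_eq_id, id]
  linear_combination L * max_add_min (hM.eigenvalues i) 0

theorem le_sum_max_eigenvalues_of_mulVec_eq_smul (hM : M.IsHermitian) {v : Fin n → ℝ}
    {μ : ℝ} (hv : v ≠ 0) (hμ : M *ᵥ v = μ • v) : μ ≤ ∑ i, max (hM.eigenvalues i) 0 := by
  have hspec : μ ∈ spectrum ℝ M := by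
    rw [← Matrix.spectrum_toLin', ← Module.End.hasEigenvalue_iff_mem_spectrum]
    exact Module.End.hasEigenvalue_of_hasEigenvector
      ⟨Module.End.mem_eigenspace_iff.mpr (by simpa using hμ), hv⟩
  obtain ⟨i, rfl⟩ := hM.spectrum_real_eq_range_eigenvalues ▸ hspec
  exact (le_max_left _ _).trans
    (Finset.single_le_sum (fun j _ => le_max_right _ _) (Finset.mem_univ i))

/-- The eigenvalue is written as `c * (v ⬝ᵥ v)` so that the case `v = 0` is harmless. -/
theorem pucciMinus_le_of_mulVec_eq_smul (hM : M.IsHermitian) {l L : ℝ} (hL : l ≤ L)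
    (v : Fin n → ℝ) (c : ℝ) (hv : M *ᵥ v = (c * (v ⬝ᵥ v)) • v) :
    pucciMinus l L hM ≤ L * M.trace - (L - l) * (c * (v ⬝ᵥ v)) := by
  have hle : c * (v ⬝ᵥ v) ≤ ∑ i, max (hM.eigenvalues i) 0 := by
    rcases eq_or_ne v 0 with rfl | hv0
    · simpa using Finset.sum_nonneg fun i _ => le_max_right (hM.eigenvalues i) 0
    · exact hM.le_sum_max_eigenvalues_of_mulVec_eq_smul hv0 hv
  rw [hM.pucciMinus_eq]
  linarith [mul_le_mul_of_nonneg_left hle (sub_nonneg.mpr hL)]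

end Matrix.IsHermitian

open Filter Topology

namespace Heisenberg

variable {d : ℕ}

theorem differentiable_heisVF (i : Fin (2*d)) : Differentiable ℝ (heisVF d i) := by
  unfold heisVF
  split_ifs <;> fun_prop

theorem hGrad_comp {f : ℝ → ℝ} {f' : ℝ} {g : (Fin (2*d+1) → ℝ) → ℝ} {y : Fin (2*d+1) → ℝ}
    (hf : HasDerivAt f f' (g y)) (hg : DifferentiableAt ℝ g y) :
    hGrad d (f ∘ g) y = f' • hGrad d g y := by
  ext i
  simp [hGrad, (hf.comp_hasFDerivAt y hg.hasFDerivAt).fderiv]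

theorem differentiableAt_hGrad {g : (Fin (2*d+1) → ℝ) → ℝ} {x : Fin (2*d+1) → ℝ}
    (hg : ContDiffAt ℝ 2 g x) (j : Fin (2*d)) :
    DifferentiableAt ℝ (fun y => hGrad d g y j) x :=
  ((hg.fderiv_right (m := 1) (by norm_num)).differentiableAt (by norm_num)).clm_apply
    (differentiable_heisVF j x)

theorem hHess_comp {f f' : ℝ → ℝ} {f'' : ℝ} {g : (Fin (2*d+1) → ℝ) → ℝ}
    {x : Fin (2*d+1) → ℝ} (hf : ∀ᶠ y in 𝓝 x, HasDerivAt f (f' (g y)) (g y))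
    (hf' : HasDerivAt f' f'' (g x)) (hg : ContDiffAt ℝ 2 g x) :
    hHess d (f ∘ g) x =
      f'' • vecMulVec (hGrad d g x) (hGrad d g x) + f' (g x) • hHess d g x := by
  have hg_diff : ∀ᶠ y in 𝓝 x, DifferentiableAt ℝ g y :=
    (hg.eventually (by simp)).mono fun y hy => hy.differentiableAt (by norm_num)
  have hX : ∀ i j, fderiv ℝ (fun y => hGrad d (f ∘ g) y j) x (heisVF d i x) =
      f'' * hGrad d g x i * hGrad d g x j
        + f' (g x) * fderiv ℝ (fun y => hGrad d g y j) x (heisVF d i x) := by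
    intro i j
    have hgrad : (fun y => hGrad d (f ∘ g) y j) =ᶠ[𝓝 x] fun y => f' (g y) * hGrad d g y j := by
      filter_upwards [hf, hg_diff] with y hfy hgy
      simp [hGrad_comp hfy hgy]
    have hderiv : HasFDerivAt (fun y => f' (g y) * hGrad d g y j) _ x :=
      (hf'.comp_hasFDerivAt x hg_diff.self_of_nhds.hasFDerivAt).fun_mul
      (differentiableAt_hGrad hg j).hasFDerivAt
    rw [hgrad.fderiv_eq, hderiv.fderiv]
    simp [hGrad]
    ring
  ext i j
  rw [Matrix.add_apply, Matrix.smul_apply, Matrix.smul_apply, vecMulVec_apply]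
  simp only [hHess, of_apply, hX, smul_eq_mul]
  ring

theorem hGradSq_eq_dotProduct (u : (Fin (2*d+1) → ℝ) → ℝ) (x : Fin (2*d+1) → ℝ) :
    hGradSq d u x = hGrad d u x ⬝ᵥ hGrad d u x := by
  simp [hGradSq, dotProduct, sq]

def conjIdx (d : ℕ) (i : Fin (2*d)) : Fin (2*d) :=
  if _h : (i : ℕ) < d then ⟨i + d, by omega⟩ else ⟨i - d, by omega⟩

def conjSign (d : ℕ) (i : Fin (2*d)) : ℝ := if (i : ℕ) < d then 1 else -1

def horiz (d : ℕ) (x : Fin (2*d+1) → ℝ) : Fin (2*d) → ℝ := fun i => x (Fin.castSucc i)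

/-- With `z = (x₁, …, x_d, y₁, …, y_d)` the horizontal part of a point, `horizJ` is `J z` for
`J (x, y) = (y, -x)`, so that `heisVF d i = ∂ᵢ + 2 (J z)ᵢ ∂ₜ`. -/
def horizJ (d : ℕ) (x : Fin (2*d+1) → ℝ) : Fin (2*d) → ℝ :=
  fun i => conjSign d i * x (Fin.castSucc (conjIdx d i))

theorem val_conjIdx (i : Fin (2*d)) :
    (conjIdx d i : ℕ) = if (i : ℕ) < d then (i : ℕ) + d else (i : ℕ) - d := by
  unfold conjIdx; split_ifs <;> rfl

theorem conjIdx_involutive : Function.Involutive (conjIdx d) := fun i => by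
  have := i.isLt
  ext
  simp only [val_conjIdx]
  split_ifs <;> omega

theorem conjIdx_ne (i : Fin (2*d)) : conjIdx d i ≠ i := by
  have := i.isLt
  rw [Fin.ne_iff_vne, val_conjIdx]
  split_ifs <;> omega

theorem conjSign_conjIdx (i : Fin (2*d)) : conjSign d (conjIdx d i) = -conjSign d i := by
  have := i.isLt
  simp only [conjSign, val_conjIdx]
  split_ifs <;> (try norm_num) <;> omega

theorem conjSign_mul_self (i : Fin (2*d)) : conjSign d i * conjSign d i = 1 := by
  unfold conjSign; split_ifs <;> norm_num

theorem conjIdx_eq_iff {i j : Fin (2*d)} : conjIdx d i = j ↔ conjIdx d j = i := by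
  constructor <;> rintro rfl <;> exact conjIdx_involutive _

theorem heisVF_apply_castSucc (i j : Fin (2*d)) (x : Fin (2*d+1) → ℝ) :
    heisVF d i x (Fin.castSucc j) = if j = i then 1 else 0 := by
  have hne : Fin.castSucc j ≠ Fin.last (2*d) := (Fin.castSucc_lt_last j).ne
  unfold heisVF
  split_ifs <;> simp_all [Fin.castSucc_inj]

theorem heisVF_apply_last (i : Fin (2*d)) (x : Fin (2*d+1) → ℝ) :
    heisVF d i x (Fin.last (2*d)) = 2 * horizJ d x i := by
  have hne : Fin.last (2*d) ≠ Fin.castSucc i := (Fin.castSucc_lt_last i).ne'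
  unfold heisVF horizJ conjSign conjIdx
  split_ifs <;> simp [hne]

theorem dotProduct_horiz_horizJ (x : Fin (2*d+1) → ℝ) : horiz d x ⬝ᵥ horizJ d x = 0 := by
  refine Finset.sum_ninvolution (conjIdx d) (fun i => ?_) (fun i _ => conjIdx_ne i)
    (fun _ => Finset.mem_univ _) conjIdx_involutive
  simp only [horiz, horizJ, conjIdx_involutive i, conjSign_conjIdx]
  ring

theorem horizJ_dotProduct_self (x : Fin (2*d+1) → ℝ) :
    horizJ d x ⬝ᵥ horizJ d x = horiz d x ⬝ᵥ horiz d x := by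
  calc horizJ d x ⬝ᵥ horizJ d x = ∑ i, horiz d x (conjIdx d i) * horiz d x (conjIdx d i) := by
        refine Finset.sum_congr rfl fun i _ => ?_
        simp only [horizJ, horiz]
        linear_combination x (Fin.castSucc (conjIdx d i)) ^ 2 * conjSign_mul_self i
    _ = horiz d x ⬝ᵥ horiz d x :=
        conjIdx_involutive.bijective.sum_comp fun i => horiz d x i * horiz d x i

theorem conjSign_ite_add_ite (i j : Fin (2*d)) :
    ((if conjIdx d j = i then conjSign d j else 0) +
      if conjIdx d i = j then conjSign d i else 0) = 0 := by
  by_cases h : conjIdx d j = i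
  · rw [if_pos h, if_pos (conjIdx_eq_iff.mp h), ← h, conjSign_conjIdx]
    ring
  · rw [if_neg h, if_neg (mt conjIdx_eq_iff.mp h)]
    ring

def gaugeQuartic (d : ℕ) (x : Fin (2*d+1) → ℝ) : ℝ :=
  (∑ i : Fin (2*d), x (Fin.castSucc i) ^ 2) ^ 2 + x (Fin.last (2*d)) ^ 2

def gaugeW (d : ℕ) (x : Fin (2*d+1) → ℝ) : Fin (2*d) → ℝ :=
  (horiz d x ⬝ᵥ horiz d x) • horiz d x + x (Fin.last (2*d)) • horizJ d x

theorem gaugeQuartic_eq (x : Fin (2*d+1) → ℝ) :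
    gaugeQuartic d x = (horiz d x ⬝ᵥ horiz d x) ^ 2 + x (Fin.last (2*d)) ^ 2 := by
  simp [gaugeQuartic, dotProduct, horiz, sq]

theorem gaugeQuartic_nonneg (x : Fin (2*d+1) → ℝ) : 0 ≤ gaugeQuartic d x := by
  unfold gaugeQuartic; positivity

theorem hGrad_gaugeQuartic (x : Fin (2*d+1) → ℝ) :
    hGrad d (gaugeQuartic d) x = (4 : ℝ) • gaugeW d x := by
  have h : HasFDerivAt (gaugeQuartic d) _ x :=
    ((HasFDerivAt.fun_sum fun k _ =>
      (hasFDerivAt_apply (𝕜 := ℝ) (Fin.castSucc k) x).pow 2).pow 2).add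
        ((hasFDerivAt_apply (𝕜 := ℝ) (Fin.last (2*d)) x).pow 2)
  ext i
  simp [hGrad, h.fderiv, heisVF_apply_castSucc, heisVF_apply_last, gaugeW, horiz, dotProduct,
    sq]
  ring

theorem fderiv_hGrad_gaugeQuartic (x : Fin (2*d+1) → ℝ) (i j : Fin (2*d)) :
    fderiv ℝ (fun y => hGrad d (gaugeQuartic d) y j) x (heisVF d i x) =
      4 * ((horiz d x ⬝ᵥ horiz d x) * (if i = j then 1 else 0) + 2 * horiz d x i * horiz d x j
        + 2 * horizJ d x i * horizJ d x j
        + x (Fin.last (2*d)) * (if conjIdx d j = i then conjSign d j else 0)) := by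
  have hfun : (fun y => hGrad d (gaugeQuartic d) y j) = fun y => 4 * gaugeW d y j :=
    funext fun y => by simp [hGrad_gaugeQuartic]
  have h : HasFDerivAt (fun y => 4 * gaugeW d y j) _ x :=
    (((HasFDerivAt.fun_sum fun k _ => (hasFDerivAt_apply (𝕜 := ℝ) (Fin.castSucc k) x).mul
      (hasFDerivAt_apply (𝕜 := ℝ) (Fin.castSucc k) x)).mul
        (hasFDerivAt_apply (𝕜 := ℝ) (Fin.castSucc j) x)).add
      ((hasFDerivAt_apply (𝕜 := ℝ) (Fin.last (2*d)) x).mul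
        ((hasFDerivAt_apply (𝕜 := ℝ) (Fin.castSucc (conjIdx d j)) x).const_mul
          (conjSign d j)))).const_mul 4
  rw [hfun]
  simp [h.fderiv, heisVF_apply_castSucc, heisVF_apply_last, horiz, dotProduct,
    Finset.sum_add_distrib, eq_comm (a := i)]
  simp only [horizJ]
  split_ifs <;> ring

theorem hHess_gaugeQuartic (x : Fin (2*d+1) → ℝ) :
    hHess d (gaugeQuartic d) x = (4 * (horiz d x ⬝ᵥ horiz d x)) • (1 : Matrix _ _ ℝ)
      + (8 : ℝ) • (vecMulVec (horiz d x) (horiz d x) + vecMulVec (horizJ d x) (horizJ d x)) := by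
  ext i j
  simp only [hHess, of_apply, fderiv_hGrad_gaugeQuartic, eq_comm (a := j) (b := i)]
  rw [Matrix.add_apply, Matrix.smul_apply, Matrix.smul_apply, Matrix.add_apply, vecMulVec_apply,
    vecMulVec_apply, Matrix.one_apply]
  linear_combination 2 * x (Fin.last (2*d)) * conjSign_ite_add_ite i j

theorem gaugeW_dotProduct_self (x : Fin (2*d+1) → ℝ) :
    gaugeW d x ⬝ᵥ gaugeW d x = (horiz d x ⬝ᵥ horiz d x) * gaugeQuartic d x := by
  simp only [gaugeW, gaugeQuartic_eq, add_dotProduct, dotProduct_add, smul_dotProduct,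
    dotProduct_smul, smul_eq_mul, horizJ_dotProduct_self, dotProduct_horiz_horizJ,
    dotProduct_comm (horizJ d x) (horiz d x)]
  ring

theorem trace_hHess_gaugeQuartic (x : Fin (2*d+1) → ℝ) :
    (hHess d (gaugeQuartic d) x).trace = 8 * (d + 2) * (horiz d x ⬝ᵥ horiz d x) := by
  simp only [hHess_gaugeQuartic, trace_add, trace_smul, trace_one, trace_vecMulVec,
    horizJ_dotProduct_self, Fintype.card_fin, smul_eq_mul]
  push_cast
  ring

theorem hHess_gaugeQuartic_mulVec_gaugeW (x : Fin (2*d+1) → ℝ) :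
    hHess d (gaugeQuartic d) x *ᵥ gaugeW d x = (12 * (horiz d x ⬝ᵥ horiz d x)) • gaugeW d x := by
  have hz : horiz d x ⬝ᵥ gaugeW d x = (horiz d x ⬝ᵥ horiz d x) ^ 2 := by
    simp [gaugeW, dotProduct_add, dotProduct_horiz_horizJ, sq]
  have hJ : horizJ d x ⬝ᵥ gaugeW d x = x (Fin.last (2*d)) * (horiz d x ⬝ᵥ horiz d x) := by
    simp [gaugeW, dotProduct_add, dotProduct_comm (horizJ d x) (horiz d x),
      dotProduct_horiz_horizJ, horizJ_dotProduct_self]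
  rw [hHess_gaugeQuartic, add_mulVec, smul_mulVec, one_mulVec, smul_mulVec,
    add_mulVec, vecMulVec_mulVec, vecMulVec_mulVec, hz, hJ]
  ext i
  simp [gaugeW]
  ring

theorem hGauge_pow_four (x : Fin (2*d+1) → ℝ) : hGauge d x ^ 4 = gaugeQuartic d x := by
  show (gaugeQuartic d x ^ (1/4 : ℝ)) ^ 4 = _
  rw [← Real.rpow_natCast, ← Real.rpow_mul (gaugeQuartic_nonneg x)]
  norm_num

theorem contDiffAt_hGauge {x : Fin (2*d+1) → ℝ} (hx : 0 < hGauge d x) :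
    ContDiffAt ℝ 2 (hGauge d) x := by
  have hR : gaugeQuartic d x ≠ 0 := by
    rw [← hGauge_pow_four]; positivity
  have hpoly : ContDiff ℝ 2 (gaugeQuartic d) := by unfold gaugeQuartic; fun_prop
  exact hpoly.contDiffAt.rpow_const_of_ne hR

theorem gaugeQuartic_eq_comp : gaugeQuartic d = (fun s => s ^ 4) ∘ hGauge d :=
  funext fun x => (hGauge_pow_four x).symm

theorem hGrad_hGauge {x : Fin (2*d+1) → ℝ} (hx : 0 < hGauge d x) :
    hGrad d (hGauge d) x = (hGauge d x ^ 3)⁻¹ • gaugeW d x := by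
  have h := hGrad_comp (hasDerivAt_pow 4 (hGauge d x))
    ((contDiffAt_hGauge hx).differentiableAt two_ne_zero)
  rw [← gaugeQuartic_eq_comp, hGrad_gaugeQuartic] at h
  ext i
  have hi := congrFun h i
  simp only [Pi.smul_apply, smul_eq_mul] at hi ⊢
  norm_num at hi
  rw [eq_inv_mul_iff_mul_eq₀ (by positivity)]
  linarith

theorem hGradSq_hGauge {x : Fin (2*d+1) → ℝ} (hx : 0 < hGauge d x) :
    hGradSq d (hGauge d) x = (horiz d x ⬝ᵥ horiz d x) / hGauge d x ^ 2 := by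
  rw [hGradSq_eq_dotProduct, hGrad_hGauge hx, smul_dotProduct, dotProduct_smul,
    gaugeW_dotProduct_self, ← hGauge_pow_four]
  simp only [smul_eq_mul]
  field_simp

/-- Differentiating `R = ρ⁴` rather than `ρ = R^{1/4}` avoids derivatives of `rpow`. -/
theorem hHess_gaugeQuartic_eq_hHess_hGauge {x : Fin (2*d+1) → ℝ} (hx : 0 < hGauge d x) :
    hHess d (gaugeQuartic d) x =
      (12 * hGauge d x ^ 2) • vecMulVec (hGrad d (hGauge d) x) (hGrad d (hGauge d) x)
        + (4 * hGauge d x ^ 3) • hHess d (hGauge d) x := by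
  rw [gaugeQuartic_eq_comp]
  refine hHess_comp (f' := fun s => 4 * s ^ 3) (Eventually.of_forall fun y => ?_) ?_
    (contDiffAt_hGauge hx)
  · simpa using hasDerivAt_pow 4 (hGauge d y)
  · exact ((hasDerivAt_pow 3 (hGauge d x)).const_mul 4).congr_deriv (by norm_num; ring)

theorem trace_hHess_hGauge {x : Fin (2*d+1) → ℝ} (hx : 0 < hGauge d x) :
    (hHess d (hGauge d) x).trace = (2 * d + 1) * hGradSq d (hGauge d) x / hGauge d x := by
  have h := congrArg trace (hHess_gaugeQuartic_eq_hHess_hGauge hx)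
  rw [trace_hHess_gaugeQuartic, trace_add, trace_smul, trace_smul, trace_vecMulVec,
    ← hGradSq_eq_dotProduct, hGradSq_hGauge hx, smul_eq_mul, smul_eq_mul] at h
  rw [hGradSq_hGauge hx]
  field_simp at h ⊢
  linear_combination -h / 4

theorem hHess_hGauge_mulVec_hGrad {x : Fin (2*d+1) → ℝ} (hx : 0 < hGauge d x) :
    hHess d (hGauge d) x *ᵥ hGrad d (hGauge d) x = 0 := by
  have h := congrArg (· *ᵥ hGrad d (hGauge d) x) (hHess_gaugeQuartic_eq_hHess_hGauge hx)
  have hR : hHess d (gaugeQuartic d) x *ᵥ hGrad d (hGauge d) x =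
      (12 * (horiz d x ⬝ᵥ horiz d x)) • hGrad d (hGauge d) x := by
    rw [hGrad_hGauge hx, mulVec_smul, hHess_gaugeQuartic_mulVec_gaugeW, smul_comm]
  have hG : ((12 * hGauge d x ^ 2) • vecMulVec (hGrad d (hGauge d) x) (hGrad d (hGauge d) x))
      *ᵥ hGrad d (hGauge d) x = (12 * (horiz d x ⬝ᵥ horiz d x)) • hGrad d (hGauge d) x := by
    rw [smul_mulVec, vecMulVec_mulVec, ← hGradSq_eq_dotProduct, hGradSq_hGauge hx,
      op_smul_eq_smul, smul_smul]
    congr 1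
    field_simp
  simp only [add_mulVec, hR, hG, left_eq_add, smul_mulVec] at h
  exact (smul_eq_zero.mp h).resolve_left (by positivity)

theorem pucciMinus_hHess_comp_hGauge_le {f f' : ℝ → ℝ} {f'' : ℝ} {x : Fin (2*d+1) → ℝ}
    (hf : ∀ s, HasDerivAt f (f' s) s) (hf' : HasDerivAt f' f'' (hGauge d x))
    (hx : 0 < hGauge d x) {l L : ℝ} (hL : l ≤ L) :
    pucciMinus l L (hHess_herm d (f ∘ hGauge d) x) ≤
      l * f'' * hGradSq d (hGauge d) x
        + L * (2 * d + 1) * f' (hGauge d x) * hGradSq d (hGauge d) x / hGauge d x := by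
  have hH := hHess_comp (Eventually.of_forall fun y => hf (hGauge d y)) hf' (contDiffAt_hGauge hx)
  have hmul : hHess d (f ∘ hGauge d) x *ᵥ hGrad d (hGauge d) x =
      (f'' * (hGrad d (hGauge d) x ⬝ᵥ hGrad d (hGauge d) x)) • hGrad d (hGauge d) x := by
    rw [hH, add_mulVec, smul_mulVec, smul_mulVec, hHess_hGauge_mulVec_hGrad hx, vecMulVec_mulVec,
      op_smul_eq_smul, smul_smul, smul_zero, add_zero]
  have htrace : (hHess d (f ∘ hGauge d) x).trace = f'' * hGradSq d (hGauge d) x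
      + f' (hGauge d x) * ((2 * d + 1) * hGradSq d (hGauge d) x / hGauge d x) := by
    rw [hH, trace_add, trace_smul, trace_smul, trace_vecMulVec, trace_hHess_hGauge hx,
      hGradSq_eq_dotProduct, smul_eq_mul, smul_eq_mul]
  refine (Matrix.IsHermitian.pucciMinus_le_of_mulVec_eq_smul (hHess_herm d _ x) hL _ _
    hmul).trans_eq ?_
  rw [htrace, ← hGradSq_eq_dotProduct]
  ring

end Heisenberg

noncomputable def decayProfile (C δ s : ℝ) : ℝ := C * (1 + s ^ 2) ^ (-δ)

theorem hasDerivAt_decayProfile (C δ s : ℝ) :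
    HasDerivAt (decayProfile C δ) (-2 * C * δ * s * (1 + s ^ 2) ^ (-δ - 1)) s := by
  have hpos : 0 < 1 + s ^ 2 := by positivity
  refine ((((hasDerivAt_pow 2 s).const_add 1).rpow_const (p := -δ) (Or.inl hpos.ne')).const_mul
    C).congr_deriv ?_
  push_cast
  ring

theorem hasDerivAt_decayProfile_deriv (C δ s : ℝ) :
    HasDerivAt (fun s => -2 * C * δ * s * (1 + s ^ 2) ^ (-δ - 1))
      (-2 * C * δ * (1 + s ^ 2) ^ (-δ - 2) * (1 - (2 * δ + 1) * s ^ 2)) s := by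
  have hpos : 0 < 1 + s ^ 2 := by positivity
  have hexp : (1 + s ^ 2) ^ (-δ - 1) = (1 + s ^ 2) ^ (-δ - 2) * (1 + s ^ 2) := by
    rw [← Real.rpow_add_one hpos.ne']
    ring_nf
  refine (((hasDerivAt_id s).const_mul (-2 * C * δ)).mul
    (((hasDerivAt_pow 2 s).const_add 1).rpow_const (p := -δ - 1)
      (Or.inl hpos.ne'))).congr_deriv ?_
  rw [hexp, id]
  push_cast
  ring_nf

theorem decayProfile_pucci_le {l L C δ r G : ℝ} (N : ℝ) (hl : 0 < l) (hC : 0 ≤ C)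
    (hδ : 0 ≤ δ) (hr : 0 < r) (hG : 0 ≤ G) :
    l * (-2 * C * δ * (1 + r ^ 2) ^ (-δ - 2) * (1 - (2 * δ + 1) * r ^ 2)) * G
        + L * N * (-2 * C * δ * r * (1 + r ^ 2) ^ (-δ - 1)) * G / r ≤
      -(2 * l * C * δ) * G * (L * N / l + 1 - 2 * (δ + 1)) / (1 + r ^ 2) ^ (δ + 1) := by
  have hpos : 0 < 1 + r ^ 2 := by positivity
  have h1 : (1 + r ^ 2) ^ (-δ - 1) = ((1 + r ^ 2) ^ (δ + 1))⁻¹ := by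
    rw [← Real.rpow_neg hpos.le]; ring_nf
  have h2 : (1 + r ^ 2) ^ (-δ - 2) = ((1 + r ^ 2) ^ (δ + 1))⁻¹ * (1 + r ^ 2)⁻¹ := by
    rw [← h1, ← Real.rpow_neg_one, ← Real.rpow_add hpos]; ring_nf
  rw [h1, h2, ← sub_nonneg]
  have hP : 0 < (1 + r ^ 2) ^ (δ + 1) := by positivity
  convert (by positivity : 0 ≤ 4 * l * C * δ * (δ + 1) * G / ((1 + r ^ 2) ^ (δ + 1) * (1 + r ^ 2)))
    using 1
  field_simp
  ring

theorem counterexample_supersolution_general (d : ℕ) (l L δ C : ℝ)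
    (hl : 0 < l) (hL : l ≤ L) (hδ : 0 < δ) (hC : 0 < C)
    (β : ℝ) (hβ : β = L * (2*d+1) / l + 1)
    (x : Fin (2*d+1) → ℝ) (hx : 0 < hGauge d x) :
    pucciMinus l L
        (hHess_herm d (fun y => C * (1 + hGauge d y ^ 2) ^ (-δ)) x) ≤
      -(2 * l * C * δ) * hGradSq d (hGauge d) x * (β - 2*(δ+1))
        / (1 + hGauge d x ^ 2) ^ (δ+1) := by
  subst hβ
  have hG : 0 ≤ hGradSq d (hGauge d) x := Finset.sum_nonneg fun _ _ => sq_nonneg _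
  exact (Heisenberg.pucciMinus_hHess_comp_hGauge_le (hasDerivAt_decayProfile C δ)
    (hasDerivAt_decayProfile_deriv C δ _) hx hL).trans
      (decayProfile_pucci_le _ hl hC.le hδ.le hx hG)

/-- for `u(x) = C(1+ρ²)^{−δ}` with `2(δ+1) < β = Λ(Q−1)/λ+1`, at points with
`ρ² ≥ 1/(2δ+1)` one has
`M⁻_{λ,Λ}(D²_{ℍ^d}u) ≤ −2λCδ|Dρ|²(β−2(δ+1))/(1+ρ²)^{δ+1}`. -/
theorem counterexample_supersolution (d : ℕ) (hd : 1 ≤ d) (l L δ C : ℝ)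
    (hl : 0 < l) (hL : l ≤ L) (hδ : 0 < δ) (hC : 0 < C)
    (β : ℝ) (hβ : β = L * (2*d+1) / l + 1) (h2δ : 2 * (δ + 1) < β)
    (x : Fin (2*d+1) → ℝ) (hx : 0 < hGauge d x)
    (hx2 : 1 / (2*δ+1) ≤ hGauge d x ^ 2) :
    pucciMinus l L
        (hHess_herm d (fun y => C * (1 + hGauge d y ^ 2) ^ (-δ)) x) ≤
      -(2 * l * C * δ) * hGradSq d (hGauge d) x * (β - 2*(δ+1))
        / (1 + hGauge d x ^ 2) ^ (δ+1) :=
  counterexample_supersolution_general d l L δ C hl hL hδ hC β hβ x hx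
end

section
/- Let β > 3 and R_1 ≥ exp((2β−3)/((β−2)(β−1))) − 1. Then the function g(r) = log(1+r)/r^{β−2} is convex and nonincreasing on [R_1, ∞). -/
/-!
With `t = r / (1 + r) ∈ [0, 1)`, `L = log (1 + r)` and `p = β - 2`, one computes
`g' = (t - p L) / r^(p+1)` and `g'' = (p (p+1) L - 2 p t - t²) / r^(p+2)`.
The hypothesis on `R₁` says exactly `p (p+1) L ≥ 2p + 1` at `r = R₁`, hence on `[R₁, ∞)`; this dominates
`2 p t + t²`, and also gives `p L ≥ (2p+1)/(p+1) ≥ 1 > t`.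
-/

open Real Set

section

variable {r : ℝ}

lemma hasDerivAt_log_one_add (hr : 1 + r ≠ 0) :
    HasDerivAt (fun r : ℝ => log (1 + r)) (1 / (1 + r)) r := by
  simpa using ((hasDerivAt_id r).const_add 1).log hr

lemma hasDerivAt_log_one_add_div_rpow (p : ℝ) (hr : 0 < r) :
    HasDerivAt (fun r : ℝ => log (1 + r) / r ^ p)
      ((r / (1 + r) - p * log (1 + r)) / r ^ (p + 1)) r := by
  have h1r : 0 < 1 + r := by linarith
  refine ((hasDerivAt_log_one_add h1r.ne').div (hasDerivAt_rpow_const (Or.inl hr.ne'))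
    (rpow_pos_of_pos hr p).ne') |>.congr_deriv ?_
  rw [rpow_sub_one hr.ne', rpow_add_one hr.ne']
  field_simp

lemma hasDerivAt_deriv_log_one_add_div_rpow (p : ℝ) (hr : 0 < r) :
    HasDerivAt (fun r : ℝ => (r / (1 + r) - p * log (1 + r)) / r ^ (p + 1))
      ((p * (p + 1) * log (1 + r) - 2 * p * (r / (1 + r)) - (r / (1 + r)) ^ 2) / r ^ (p + 2))
      r := by
  have h1r : 0 < 1 + r := by linarith
  have hnum : HasDerivAt (fun r : ℝ => r / (1 + r) - p * log (1 + r))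
      ((1 * (1 + r) - r * 1) / (1 + r) ^ 2 - p * (1 / (1 + r))) r :=
    ((hasDerivAt_id r).div ((hasDerivAt_id r).const_add 1) h1r.ne').sub
      ((hasDerivAt_log_one_add h1r.ne').const_mul p)
  refine (hnum.div (hasDerivAt_rpow_const (Or.inl hr.ne')) (rpow_pos_of_pos hr _).ne')
    |>.congr_deriv ?_
  rw [add_sub_cancel_right, show p + 2 = p + 1 + 1 by ring]
  simp only [rpow_add_one hr.ne']
  field_simp
  ring

lemma deriv_log_one_add_div_rpow_nonpos {p : ℝ} (hp : 0 < p) (hr : 0 < r)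
    (hL : 2 * p + 1 ≤ p * (p + 1) * log (1 + r)) :
    (r / (1 + r) - p * log (1 + r)) / r ^ (p + 1) ≤ 0 := by
  have ht : r / (1 + r) < 1 := (div_lt_one (by linarith)).mpr (by linarith)
  have hpL : 1 ≤ p * log (1 + r) :=
    le_of_mul_le_mul_left (by linarith) (by linarith : 0 < p + 1)
  exact div_nonpos_of_nonpos_of_nonneg (by linarith) (rpow_pos_of_pos hr _).le

lemma deriv2_log_one_add_div_rpow_nonneg {p : ℝ} (hp : 0 < p) (hr : 0 < r)
    (hL : 2 * p + 1 ≤ p * (p + 1) * log (1 + r)) :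
    0 ≤ (p * (p + 1) * log (1 + r) - 2 * p * (r / (1 + r)) - (r / (1 + r)) ^ 2) /
      r ^ (p + 2) := by
  have h1r : 0 < 1 + r := by linarith
  have ht0 : 0 ≤ r / (1 + r) := div_nonneg hr.le h1r.le
  have ht1 : r / (1 + r) ≤ 1 := (div_le_one h1r).mpr (by linarith)
  refine div_nonneg ?_ (rpow_pos_of_pos hr _).le
  nlinarith [mul_le_mul_of_nonneg_left ht1 hp.le, mul_le_one₀ ht1 ht0 ht1]

lemma convexOn_antitoneOn_log_one_add_div_rpow_Ici {p R : ℝ} (hp : 0 < p) (hR : 0 < R)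
    (hL : 2 * p + 1 ≤ p * (p + 1) * log (1 + R)) :
    ConvexOn ℝ (Ici R) (fun r : ℝ => log (1 + r) / r ^ p) ∧
    AntitoneOn (fun r : ℝ => log (1 + r) / r ^ p) (Ici R) := by
  have hpos : ∀ x ∈ interior (Ici R), 0 < x := fun x hx =>
    hR.trans (by rwa [interior_Ici] at hx)
  have hLx : ∀ x ∈ interior (Ici R), 2 * p + 1 ≤ p * (p + 1) * log (1 + x) := by
    intro x hx
    rw [interior_Ici] at hx
    refine hL.trans (mul_le_mul_of_nonneg_left ?_ (by positivity))
    exact log_le_log (by linarith) (by linarith [mem_Ioi.mp hx])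
  have hcont : ContinuousOn (fun r : ℝ => log (1 + r) / r ^ p) (Ici R) := fun x hx =>
    (hasDerivAt_log_one_add_div_rpow p (hR.trans_le hx)).continuousAt.continuousWithinAt
  have hderiv := fun x hx =>
    (hasDerivAt_log_one_add_div_rpow p (hpos x hx)).hasDerivWithinAt (s := interior (Ici R))
  refine ⟨convexOn_of_hasDerivWithinAt2_nonneg (convex_Ici R) hcont hderiv
    (fun x hx => (hasDerivAt_deriv_log_one_add_div_rpow p (hpos x hx)).hasDerivWithinAt)
    (fun x hx => deriv2_log_one_add_div_rpow_nonneg hp (hpos x hx) (hLx x hx)),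
    antitoneOn_of_hasDerivWithinAt_nonpos (convex_Ici R) hcont hderiv
    (fun x hx => deriv_log_one_add_div_rpow_nonpos hp (hpos x hx) (hLx x hx))⟩

end

/-- for `β > 3` and `R₁ ≥ exp((2β−3)/((β−2)(β−1))) − 1`, the function
`g(r) = log(1+r)/r^{β−2}` is convex and nonincreasing on `[R₁,∞)`. -/
theorem log_over_power_convex_antitone (β R1 : ℝ) (hβ : 3 < β)
    (hR1 : Real.exp ((2*β - 3) / ((β-2)*(β-1))) - 1 ≤ R1) :
    ConvexOn ℝ (Set.Ici R1) (fun r : ℝ => Real.log (1+r) / r ^ (β-2)) ∧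
    AntitoneOn (fun r : ℝ => Real.log (1+r) / r ^ (β-2)) (Set.Ici R1) := by
  have hprod : 0 < (β - 2) * (β - 1) := by nlinarith
  have hc : 0 < (2 * β - 3) / ((β - 2) * (β - 1)) := div_pos (by linarith) hprod
  have hR1pos : 0 < R1 := by linarith [one_lt_exp_iff.mpr hc]
  refine convexOn_antitoneOn_log_one_add_div_rpow_Ici (by linarith) hR1pos ?_
  have hlog : (2 * β - 3) / ((β - 2) * (β - 1)) ≤ log (1 + R1) :=
    (le_log_iff_exp_le (by linarith)).mpr (by linarith)
  rw [div_le_iff₀' hprod] at hlog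
  linarith
end
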